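/- The graph G contains a multicolored k-clique, i.e., a clique with exactly one vertex from each class V_i, if and only if the constructed instance (H, T) is a yes-instance of Steiner Orientation. -/

import Mathlib

/-- A mixed graph `G = (V, E, A)`: a simple graph `E` of undirected edges together
with a set `A` of arcs (ordered pairs of distinct vertices). -/
structure MixedGraph (V : Type*) where
  E : SimpleGraph V
  A : V → V → Prop
  A_irrefl : ∀ v : V, ¬ A v v

namespace MixedGraph

variable {V : Type*}

/-- The underlying simple graph of a mixed graph. -/
def underlying (G : MixedGraph V) : SimpleGraph V where
  Adj u v := G.E.Adj u v ∨ G.A u v ∨ G.A v u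
  symm := by
    refine ⟨?_⟩
    intro u v h
    rcases h with h | h | h
    · exact Or.inl h.symm
    · exact Or.inr (Or.inr h)
    · exact Or.inr (Or.inl h)
  loopless := by
    refine ⟨?_⟩
    intro v h
    rcases h with h | h | h
    · exact G.E.loopless.irrefl v h
    · exact G.A_irrefl v h
    · exact G.A_irrefl v h

/-- `G` contains a mixed cycle: a cyclic sequence of `p ≥ 2` pairwise distinct
vertices in which each consecutive pair (cyclically) is an undirected edge of `E`
or an arc of `A`, and no edge of `E` is used by two different consecutive pairs.
(`useE i = true` means the `i`-th consecutive pair uses an edge of `E`.) -/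
def HasMixedCycle (G : MixedGraph V) : Prop :=
  ∃ (p : ℕ) (c : Fin (p + 2) → V) (useE : Fin (p + 2) → Bool),
    Function.Injective c ∧
    (∀ i : Fin (p + 2),
      (useE i = true → G.E.Adj (c i) (c (i + 1))) ∧
      (useE i = false → G.A (c i) (c (i + 1)))) ∧
    (∀ i j : Fin (p + 2), i ≠ j → useE i = true → useE j = true →
      s(c i, c (i + 1)) ≠ s(c j, c (j + 1)))

/-- A mixed graph is mixed acyclic if it has no mixed cycle. -/
def MixedAcyclic (G : MixedGraph V) : Prop := ¬ G.HasMixedCycle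

/-- An orientation of the undirected edges of a mixed graph: each edge
`{u,v} ∈ E` is assigned exactly one of the two directions `(u,v)`, `(v,u)`. -/
structure Orientation (G : MixedGraph V) where
  dir : V → V → Prop
  dir_adj : ∀ u v : V, dir u v → G.E.Adj u v
  total : ∀ u v : V, G.E.Adj u v → dir u v ∨ dir v u
  antisymm : ∀ u v : V, dir u v → ¬ dir v u

/-- The arc relation of the digraph `G_λ`: the original arcs together with the
chosen orientations of the undirected edges. -/
def Orientation.arc {G : MixedGraph V} (lam : Orientation G) (u v : V) : Prop :=
  G.A u v ∨ lam.dir u v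

/-- The orientation `lam` satisfies the set `T` of terminal pairs if `G_λ`
contains a directed path from `s` to `t` for every `(s, t) ∈ T`. -/
def Orientation.Satisfies {G : MixedGraph V} (lam : Orientation G)
    (T : Set (V × V)) : Prop :=
  ∀ p ∈ T, Relation.ReflTransGen lam.arc p.1 p.2

/-- `(G, T)` is a yes-instance of Steiner Orientation: some orientation of the
undirected edges satisfies all terminal pairs. -/
def YesInstance (G : MixedGraph V) (T : Set (V × V)) : Prop :=
  ∃ lam : Orientation G, lam.Satisfies T

/-- The number of arcs of `G` having `v` as head or as tail. -/
noncomputable def degA (G : MixedGraph V) (v : V) : ℕ :=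
  {p : V × V | G.A p.1 p.2 ∧ (p.1 = v ∨ p.2 = v)}.ncard

end MixedGraph

/-- Vertices of the mixed graph `H` in the W[1]-hardness construction:
`ℓ_α, ℓ'_α, r_α, r'_α` for `α ∈ [√k]` and `x^i_j, y^i_j` for `i ∈ [k]`,
`j ∈ [n]` (here `q` plays the role of `√k`). -/
inductive HVtx (q k n : ℕ) where
  | l (a : Fin q) : HVtx q k n
  | l' (a : Fin q) : HVtx q k n
  | r (a : Fin q) : HVtx q k n
  | r' (a : Fin q) : HVtx q k n
  | x (i : Fin k) (j : Fin n) : HVtx q k n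
  | y (i : Fin k) (j : Fin n) : HVtx q k n
  deriving DecidableEq, Fintype

/-- The undirected edges of `H`: for each `i` with `h i = (α, β)` and each `j`,
the edges `{ℓ_α, x^i_j}` and `{r'_β, y^i_j}`. -/
def wE (q k n : ℕ) (h : Fin k ≃ Fin q × Fin q) : SimpleGraph (HVtx q k n) :=
  SimpleGraph.fromRel (fun u v =>
    (∃ (i : Fin k) (j : Fin n), u = HVtx.l (h i).1 ∧ v = HVtx.x i j) ∨
    (∃ (i : Fin k) (j : Fin n), u = HVtx.r' (h i).2 ∧ v = HVtx.y i j))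

/-- The arcs of `H`: `(ℓ_α, ℓ'_β)` and `(r_α, r'_β)` for all `α, β`; and for
each `i` with `h i = (α, β)` and each `j`, the arcs `(x^i_j, r_β)` and
`(ℓ'_α, y^i_j)`. -/
def wA (q k n : ℕ) (h : Fin k ≃ Fin q × Fin q) :
    HVtx q k n → HVtx q k n → Prop := fun u v =>
  (∃ a b : Fin q, u = HVtx.l a ∧ v = HVtx.l' b) ∨
  (∃ a b : Fin q, u = HVtx.r a ∧ v = HVtx.r' b) ∨
  (∃ (i : Fin k) (j : Fin n), u = HVtx.x i j ∧ v = HVtx.r (h i).2) ∨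
  (∃ (i : Fin k) (j : Fin n), u = HVtx.l' (h i).1 ∧ v = HVtx.y i j)

/-- The mixed graph `H`. -/
def wH (q k n : ℕ) (h : Fin k ≃ Fin q × Fin q) : MixedGraph (HVtx q k n) where
  E := wE q k n h
  A := wA q k n h
  A_irrefl := by
    rintro u (⟨a, b, rfl, hh⟩ | ⟨a, b, rfl, hh⟩ | ⟨i, j, rfl, hh⟩ |
      ⟨i, j, rfl, hh⟩) <;> cases hh

/-- The terminal pairs `T`: `(ℓ_α, r_β)` and `(ℓ'_α, r'_β)` for all `α, β`;
the consistency pairs `(x^i_j, y^i_{j'})` for `j ≠ j'`; and, for every non-edge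
`{v^{i₁}_{j₁}, v^{i₂}_{j₂}}` of `G` with `i₁ ≠ i₂`, the edge-checking pairs
`(x^{i₁}_{j₁}, y^{i₂}_{j₂})` and `(x^{i₂}_{j₂}, y^{i₁}_{j₁})`. -/
def wT (q k n : ℕ) (G : SimpleGraph (Fin k × Fin n)) :
    Set (HVtx q k n × HVtx q k n) :=
  {p | (∃ a b : Fin q, p = (HVtx.l a, HVtx.r b)) ∨
       (∃ a b : Fin q, p = (HVtx.l' a, HVtx.r' b)) ∨
       (∃ (i : Fin k) (j j' : Fin n), j ≠ j' ∧ p = (HVtx.x i j, HVtx.y i j')) ∨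
       (∃ (i₁ i₂ : Fin k) (j₁ j₂ : Fin n), i₁ ≠ i₂ ∧
          ¬ G.Adj (i₁, j₁) (i₂, j₂) ∧ p = (HVtx.x i₁ j₁, HVtx.y i₂ j₂))}

/-!
An orientation of `H` amounts to deciding, for every edge `{ℓ, x^i_j}`, whether it points into
`x^i_j`, and for every edge `{r', y^i_j}`, whether it points into `r'`; call `x^i_j`, resp.
`y^i_j`, selected in that case. In `H_λ`, `ℓ_α` reaches `r_β` iff some `x^i_j` with
`h i = (α, β)` is selected, `ℓ'_α` reaches `r'_β` iff some `y^i_j` is, and `x^i_j` reaches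
`y^{i'}_{j'}` iff they are not both selected: `x^i_j` can only leave towards `ℓ` or `r`, and
`y^{i'}_{j'}` can only be entered from `ℓ'` or `r'`. Hence an orientation satisfies `T` iff it
selects in every class `i` an `x^i_j` and a `y^i_j` with the same `j`, and the selected
vertices of different classes are adjacent in `G`.
-/

theorem Relation.ReflTransGen.invariant {α : Type*} {r : α → α → Prop} {S : α → Prop}
    (hS : ∀ a b, S a → r a b → S b) {a b : α} (hab : Relation.ReflTransGen r a b)
    (ha : S a) : S b := by
  induction hab with
  | refl => exact ha
  | tail _ hbc ih => exact hS _ _ ih hbc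

namespace MixedGraph.Orientation

variable {V : Type*} {G : MixedGraph V} (lam : G.Orientation)

theorem arc_iff {u v : V} : lam.arc u v ↔ G.A u v ∨ G.E.Adj u v ∧ lam.dir u v :=
  or_congr_right ⟨fun huv => ⟨lam.dir_adj u v huv, huv⟩, And.right⟩

theorem dir_of_not_dir {u v : V} (huv : G.E.Adj u v) (hvu : ¬ lam.dir v u) : lam.dir u v :=
  (lam.total u v huv).resolve_right hvu

end MixedGraph.Orientation

namespace wH

open HVtx MixedGraph Relation

variable {q k n : ℕ} {h : Fin k ≃ Fin q × Fin q}

def selectionOrientation (s : Fin k → Fin n) : (wH q k n h).Orientation where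
  dir
    | l a, x i j => (h i).1 = a ∧ j = s i
    | x i j, l a => (h i).1 = a ∧ j ≠ s i
    | y i j, r' b => (h i).2 = b ∧ j = s i
    | r' b, y i j => (h i).2 = b ∧ j ≠ s i
    | _, _ => False
  dir_adj u v := by
    cases u <;> cases v <;> simp [wH, wE] <;> grind
  total u v := by
    cases u <;> cases v <;> simp [wH, wE] <;> grind
  antisymm u v := by
    cases u <;> cases v <;> simp <;> grind

variable (lam : (wH q k n h).Orientation)

theorem exists_of_reach_l_r {a b : Fin q} (hp : ReflTransGen lam.arc (l a) (r b)) :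
    ∃ i, h i = (a, b) ∧ ∃ j, lam.dir (l a) (x i j) := by
  let S : HVtx q k n → Prop
    | l a' => a' = a
    | x i j => (h i).1 = a ∧ lam.dir (l a) (x i j)
    | r b => ∃ i, h i = (a, b) ∧ ∃ j, lam.dir (l a) (x i j)
    | _ => True
  refine hp.invariant (S := S) ?_ rfl
  intro u v hu huv
  rw [lam.arc_iff] at huv
  cases u <;> cases v <;> simp only [S] at hu ⊢ <;> simp [wH, wE, wA] at huv
  case l.x => subst hu; exact ⟨huv.1.symm, huv.2⟩
  case x.l => exact huv.1.trans hu.1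
  case x.r => exact ⟨_, Prod.ext hu.1 huv.symm, _, hu.2⟩

theorem exists_of_reach_l'_r' {a b : Fin q} (hp : ReflTransGen lam.arc (l' a) (r' b)) :
    ∃ i, h i = (a, b) ∧ ∃ j, lam.dir (y i j) (r' b) := by
  let S : HVtx q k n → Prop
    | l' a' => a' = a
    | y i j => (h i).1 = a ∨ lam.dir (r' (h i).2) (y i j)
    | r' b => ∃ i, h i = (a, b) ∧ ∃ j, lam.dir (y i j) (r' b)
    | _ => False
  refine hp.invariant (S := S) ?_ rfl
  intro u v hu huv
  rw [lam.arc_iff] at huv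
  cases u <;> cases v <;> simp only [S] at hu ⊢ <;> simp [wH, wE, wA] at huv
  case l'.y => exact Or.inl (huv.symm.trans hu)
  case r'.y => obtain ⟨rfl, hd⟩ := huv; exact Or.inr hd
  case y.r' =>
    obtain ⟨rfl, hd⟩ := huv
    refine ⟨_, Prod.ext ?_ rfl, _, hd⟩
    exact hu.resolve_right (lam.antisymm _ _ hd)

theorem dir_of_reach_x_y {i i' : Fin k} {j j' : Fin n}
    (hp : ReflTransGen lam.arc (x i j) (y i' j')) (hx : lam.dir (l (h i).1) (x i j)) :
    lam.dir (r' (h i').2) (y i' j') := by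
  let S : HVtx q k n → Prop
    | x i j => lam.dir (l (h i).1) (x i j)
    | r _ | r' _ => True
    | y i j => lam.dir (r' (h i).2) (y i j)
    | _ => False
  refine hp.invariant (S := S) ?_ hx
  intro u v hu huv
  rw [lam.arc_iff] at huv
  cases u <;> cases v <;> simp only [S] at hu ⊢ <;> simp [wH, wE, wA] at huv
  case x.l => obtain ⟨rfl, hd⟩ := huv; exact lam.antisymm _ _ hu hd
  case r'.y => obtain ⟨rfl, hd⟩ := huv; exact hd

theorem reach_l_r_iff (i : Fin k) :
    ReflTransGen lam.arc (l (h i).1) (r (h i).2) ↔ ∃ j, lam.dir (l (h i).1) (x i j) := by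
  refine ⟨fun hp => ?_, fun ⟨j, hd⟩ => .head (Or.inr hd) (.single (Or.inl ?_))⟩
  · obtain ⟨i', hi', hd⟩ := exists_of_reach_l_r lam hp
    obtain rfl := h.injective (hi'.trans Prod.mk.eta)
    exact hd
  · simp [wH, wA]

theorem reach_l'_r'_iff (i : Fin k) :
    ReflTransGen lam.arc (l' (h i).1) (r' (h i).2) ↔ ∃ j, lam.dir (y i j) (r' (h i).2) := by
  refine ⟨fun hp => ?_, fun ⟨j, hd⟩ => .head (Or.inl ?_) (.single (Or.inr hd))⟩
  · obtain ⟨i', hi', hd⟩ := exists_of_reach_l'_r' lam hp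
    obtain rfl := h.injective (hi'.trans Prod.mk.eta)
    exact hd
  · simp [wH, wA]

theorem reach_x_y_iff {i i' : Fin k} {j j' : Fin n} :
    ReflTransGen lam.arc (x i j) (y i' j') ↔
      ¬ (lam.dir (l (h i).1) (x i j) ∧ lam.dir (y i' j') (r' (h i').2)) := by
  refine ⟨fun hp ⟨hx, hy⟩ => lam.antisymm _ _ hy (dir_of_reach_x_y lam hp hx), fun hn => ?_⟩
  by_cases hx : lam.dir (l (h i).1) (x i j)
  · have hry := lam.dir_of_not_dir (by simp [wH, wE]) fun hy => hn ⟨hx, hy⟩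
    exact .head (b := r (h i).2) (Or.inl (by simp [wH, wA]))
      (.head (b := r' (h i').2) (Or.inl (by simp [wH, wA])) (.single (Or.inr hry)))
  · have hxl := lam.dir_of_not_dir (by simp [wH, wE]) hx
    exact .head (Or.inr hxl)
      (.head (b := l' (h i').1) (Or.inl (by simp [wH, wA])) (.single (Or.inl (by simp [wH, wA]))))

end wH

theorem steinerOrientation_stmt8_general (q k n : ℕ) (h : Fin k ≃ Fin q × Fin q)
    (G : SimpleGraph (Fin k × Fin n)) :
    (∃ s : Fin k → Fin n,
        ∀ i₁ i₂ : Fin k, i₁ ≠ i₂ → G.Adj (i₁, s i₁) (i₂, s i₂)) ↔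
      (wH q k n h).YesInstance (wT q k n G) := by
  constructor
  · rintro ⟨s, hs⟩
    let lam : (wH q k n h).Orientation := wH.selectionOrientation s
    refine ⟨lam, ?_⟩
    rintro _ (⟨a, b, rfl⟩ | ⟨a, b, rfl⟩ | ⟨i, j, j', hne, rfl⟩ |
      ⟨i₁, i₂, j₁, j₂, hne, hG, rfl⟩)
    · obtain ⟨i, hi⟩ := h.surjective (a, b)
      simpa [hi] using (wH.reach_l_r_iff lam i).2 ⟨s i, rfl, rfl⟩
    · obtain ⟨i, hi⟩ := h.surjective (a, b)
      simpa [hi] using (wH.reach_l'_r'_iff lam i).2 ⟨s i, rfl, rfl⟩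
    · exact wH.reach_x_y_iff _ |>.2 fun ⟨⟨_, hj⟩, _, hj'⟩ => hne (hj.trans hj'.symm)
    · exact wH.reach_x_y_iff _ |>.2 fun ⟨⟨_, hj₁⟩, _, hj₂⟩ => hG (hj₁ ▸ hj₂ ▸ hs i₁ i₂ hne)
  · rintro ⟨lam, hT⟩
    choose s hs using fun i => (wH.reach_l_r_iff lam i).1 (hT _ (Or.inl ⟨_, _, rfl⟩))
    choose t ht using fun i => (wH.reach_l'_r'_iff lam i).1 (hT _ (Or.inr (Or.inl ⟨_, _, rfl⟩)))
    have hsel : ∀ i i', (HVtx.x i (s i), HVtx.y i' (t i')) ∉ wT q k n G := fun i i' hmem =>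
      (wH.reach_x_y_iff lam).1 (hT _ hmem) ⟨hs i, ht i'⟩
    obtain rfl : s = t := funext fun i => by_contra fun hne =>
      hsel i i (Or.inr (Or.inr (Or.inl ⟨i, _, _, hne, rfl⟩)))
    exact ⟨s, fun i₁ i₂ hne => by_contra fun hG =>
      hsel i₁ i₂ (Or.inr (Or.inr (Or.inr ⟨i₁, i₂, _, _, hne, hG, rfl⟩)))⟩

/-- the graph `G` (with vertex classes `V_i = {i} × Fin n`, each an
independent set) contains a multicolored `k`-clique iff the constructed
instance `(H, T)` is a yes-instance of Steiner Orientation. -/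
theorem steinerOrientation_stmt8 (q k n : ℕ) (h : Fin k ≃ Fin q × Fin q)
    (G : SimpleGraph (Fin k × Fin n))
    (hind : ∀ (i : Fin k) (j j' : Fin n), ¬ G.Adj (i, j) (i, j')) :
    (∃ s : Fin k → Fin n,
        ∀ i₁ i₂ : Fin k, i₁ ≠ i₂ → G.Adj (i₁, s i₁) (i₂, s i₂)) ↔
      (wH q k n h).YesInstance (wT q k n G) :=
  steinerOrientation_stmt8_general q k n h G
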